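/- Let c, c', ε, Q be real numbers with 1 < c < c' < 2, 0 < ε < 1, and Q > 1, and let ξ be an irrational real number with 0 < ξ < 1. Then at least one of the following holds: (i) there exist coprime integers u ≥ 1 and v ∈ {0, …, u} such that u < (2c²/((c−1)(c'−c))) · (1/ε) and |ξ − v/u| ≤ (2/(c−1)) · (1 + c²/(c'−c)) · 1/(uQ); or (ii) there exist integers p and q such that Q ≤ q ≤ cQ and ε/q ≤ ξ − p/q ≤ c'ε/q. -/

import Mathlib

/-!
Dirichlet's theorem with denominator bound `(c - 1) Q` gives a reduced fraction `v / u` with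
`|u ξ - v| < 1 / ((c - 1) Q)`. If `u` is small this is alternative (i). Otherwise, since `v` is
invertible modulo `u`, some `q` in the window `(⌊c Q⌋ - u, ⌊c Q⌋] ⊆ [Q, c Q]` makes `q v ≡ m (mod u)`
for any prescribed integer `m`; then `u (q ξ - p) = m + q (u ξ - v)` for a suitable `p`, and as `u`
is large the interval `[u ε, u c' ε]` has room for an `m` that absorbs the error `q (u ξ - v)`.
-/

open Real

theorem exists_coprime_abs_mul_sub_lt_inv_max (ξ B : ℝ) :
    ∃ u v : ℤ, 0 < u ∧ IsCoprime u v ∧ (u : ℝ) ≤ max 1 B ∧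
      |(u : ℝ) * ξ - v| < (max 1 B)⁻¹ := by
  set n := ⌊max 1 B⌋₊
  have hn : 0 < n := Nat.floor_pos.mpr (le_max_left 1 B)
  obtain ⟨r, hr, hden⟩ := exists_rat_abs_sub_le_and_den_le ξ hn
  have hden_pos : (0 : ℝ) < r.den := mod_cast r.den_pos
  refine ⟨r.den, r.num, mod_cast r.den_pos, ?_, ?_, ?_⟩
  · rw [Int.isCoprime_iff_gcd_eq_one]
    exact r.reduced.symm
  · exact (Nat.cast_le.mpr hden).trans (Nat.floor_le (zero_le_one.trans (le_max_left 1 B)))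
  · have hnB : max 1 B < n + 1 := Nat.lt_floor_add_one _
    calc |(r.den : ℝ) * ξ - r.num| = r.den * |ξ - r| := by
          rw [← abs_of_pos hden_pos, ← abs_mul, abs_of_pos hden_pos, mul_sub,
            Rat.cast_def, mul_div_cancel₀ _ hden_pos.ne']
      _ ≤ r.den * (1 / ((n + 1) * r.den)) := by gcongr
      _ = (n + 1 : ℝ)⁻¹ := by field_simp
      _ < (max 1 B)⁻¹ := inv_strictAnti₀ (by positivity) hnB

theorem mem_Icc_of_abs_mul_sub_lt_one {ξ : ℝ} {u v : ℤ} (hu : 0 ≤ u) (hξ0 : 0 ≤ ξ) (hξ1 : ξ ≤ 1)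
    (h : |(u : ℝ) * ξ - v| < 1) : v ∈ Set.Icc 0 u := by
  have hu' : (0 : ℝ) ≤ u := mod_cast hu
  have huξ : (u : ℝ) * ξ ≤ u := mul_le_of_le_one_right hu' hξ1
  have huξ0 := mul_nonneg hu' hξ0
  obtain ⟨h₁, h₂⟩ := abs_lt.mp h
  have hv0 : (-1 : ℝ) < v := by linarith
  have hvu : (v : ℝ) < u + 1 := by linarith
  constructor
  · have : (-1 : ℤ) < v := mod_cast hv0
    omega
  · have : v < u + 1 := mod_cast hvu
    omega

theorem IsCoprime.exists_mul_sub_eq_mul {u v : ℤ} (h : IsCoprime u v) (hu : 0 < u) (m A : ℤ) :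
    ∃ q t : ℤ, A - u < q ∧ q ≤ A ∧ q * v - m = u * t := by
  obtain ⟨a, b, hab⟩ := h
  have hdiv := Int.mul_ediv_add_emod (A - m * b) u
  refine ⟨A - (A - m * b) % u, (A - m * b) / u * v - m * a, ?_, ?_, ?_⟩
  · linarith [Int.emod_lt_of_pos (A - m * b) hu]
  · linarith [Int.emod_nonneg (A - m * b) hu.ne']
  · linear_combination -v * hdiv + m * hab

theorem exists_int_mul_sub_mem_Icc (ξ : ℝ) {u v : ℤ} (hcop : IsCoprime u v) (hu : 0 < u)
    {X Y lo hi : ℝ} (hX : 0 ≤ X) (hXY : X + u ≤ Y)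
    (hgap : 1 + 2 * Y * |(u : ℝ) * ξ - v| ≤ u * (hi - lo)) :
    ∃ p q : ℤ, X ≤ q ∧ q ≤ Y ∧ lo ≤ q * ξ - p ∧ q * ξ - p ≤ hi := by
  set δ := (u : ℝ) * ξ - v
  have hu' : (0 : ℝ) < u := mod_cast hu
  set m := ⌈u * lo + Y * |δ|⌉
  have hm_lo : u * lo + Y * |δ| ≤ m := Int.le_ceil _
  have hm_hi : (m : ℝ) ≤ u * hi - Y * |δ| := by
    linarith [Int.ceil_lt_add_one (u * lo + Y * |δ|)]
  obtain ⟨q, p, hq_lo, hq_hi, hqp⟩ := hcop.exists_mul_sub_eq_mul hu m ⌊Y⌋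
  have hqY : (q : ℝ) ≤ Y := (Int.cast_le.mpr hq_hi).trans (Int.floor_le Y)
  have hXq : X ≤ q := by
    have : ((⌊Y⌋ - u + 1 : ℤ) : ℝ) ≤ q := Int.cast_le.mpr (by omega)
    push_cast at this
    linarith [Int.lt_floor_add_one Y]
  have hqδ : |(q : ℝ) * δ| ≤ Y * |δ| := by
    rw [abs_mul, abs_of_nonneg (hX.trans hXq)]
    exact mul_le_mul_of_nonneg_right hqY (abs_nonneg δ)
  have hkey : (u : ℝ) * (q * ξ - p) = m + q * δ := by
    have : (q : ℝ) * v - m = u * p := mod_cast hqp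
    linear_combination this
  obtain ⟨hqδ₁, hqδ₂⟩ := abs_le.mp hqδ
  refine ⟨p, q, hXq, hqY, le_of_mul_le_mul_left ?_ hu', le_of_mul_le_mul_left ?_ hu'⟩
  · linarith
  · linarith

theorem one_lt_two_mul_sq_div {c c' : ℝ} (hc : 1 < c) (hcc' : c < c') (hc' : c' < 2) :
    1 < 2 * c ^ 2 / ((c - 1) * (c' - c)) := by
  rw [one_lt_div (mul_pos (by linarith) (by linarith))]
  nlinarith

theorem one_add_two_mul_div_lt {c c' : ℝ} (hc : 1 < c) (hcc' : c < c') :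
    1 + 2 * (c / (c - 1)) < 2 * c ^ 2 / ((c - 1) * (c' - c)) * (c' - 1) := by
  have hc1 : 0 < c - 1 := by linarith
  have hcc'1 : 0 < c' - c := by linarith
  rw [div_mul_eq_mul_div, ← sub_pos]
  have : 2 * c ^ 2 * (c' - 1) / ((c - 1) * (c' - c)) - (1 + 2 * (c / (c - 1)))
      = (2 * c ^ 2 * (c' - 1) - (3 * c - 1) * (c' - c)) / ((c - 1) * (c' - c)) := by
    field_simp
    ring
  rw [this]
  -- `3c - 1 < 2c²` because `2c² - 3c + 1 = (2c - 1)(c - 1)`, and `c' - c < c' - 1`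
  apply div_pos _ (by positivity)
  nlinarith [mul_pos hc1 hcc'1, mul_pos (mul_pos hc1 hcc'1) (by linarith : (0 : ℝ) < 2 * c - 1)]

theorem abs_sub_div_le_of_abs_mul_sub_lt {c c' Q ξ u v : ℝ} (hc : 1 < c) (hcc' : c < c')
    (hQ : 0 < Q) (hu : 0 < u) (h : |u * ξ - v| < 1 / ((c - 1) * Q)) :
    |ξ - v / u| ≤ 2 / (c - 1) * (1 + c ^ 2 / (c' - c)) * (1 / (u * Q)) := by
  have hc1 : 0 < c - 1 := by linarith
  have hconst : 1 / (c - 1) ≤ 2 / (c - 1) * (1 + c ^ 2 / (c' - c)) := by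
    rw [div_mul_eq_mul_div]
    gcongr
    nlinarith [div_nonneg (sq_nonneg c) (by linarith : (0 : ℝ) ≤ c' - c)]
  calc |ξ - v / u| = |u * ξ - v| / u := by
        rw [← abs_of_pos hu, ← abs_div, abs_of_pos hu, sub_div, mul_div_cancel_left₀ _ hu.ne']
    _ ≤ 1 / ((c - 1) * Q) / u := by gcongr
    _ = 1 / (c - 1) * (1 / (u * Q)) := by field_simp
    _ ≤ 2 / (c - 1) * (1 + c ^ 2 / (c' - c)) * (1 / (u * Q)) := by gcongr

theorem one_add_two_mul_abs_le {c c' ε Q δ u : ℝ} (hc : 1 < c) (hcc' : c < c') (hε : 0 < ε)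
    (hQ : 0 < Q) (hδ : |δ| < 1 / ((c - 1) * Q))
    (hu : 2 * c ^ 2 / ((c - 1) * (c' - c)) * (1 / ε) ≤ u) :
    1 + 2 * (c * Q) * |δ| ≤ u * (c' * ε - ε) := by
  have hc1 : 0 < c - 1 := by linarith
  have hE : c * Q * |δ| ≤ c / (c - 1) := by
    calc c * Q * |δ| ≤ c * Q * (1 / ((c - 1) * Q)) := by gcongr
      _ = c / (c - 1) := by field_simp
  calc 1 + 2 * (c * Q) * |δ| ≤ 1 + 2 * (c / (c - 1)) := by linarith
    _ ≤ 2 * c ^ 2 / ((c - 1) * (c' - c)) * (c' - 1) := (one_add_two_mul_div_lt hc hcc').le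
    _ = 2 * c ^ 2 / ((c - 1) * (c' - c)) * (1 / ε) * ((c' - 1) * ε) := by field_simp
    _ ≤ u * ((c' - 1) * ε) := by gcongr; nlinarith
    _ = u * (c' * ε - ε) := by ring

theorem farey_dichotomy_general (c c' ε Q : ℝ)
    (hc : 1 < c) (hcc' : c < c') (hc' : c' < 2) (hε0 : 0 < ε) (hε1 : ε < 1) (hQ : 1 < Q)
    (ξ : ℝ) (hξ0 : 0 < ξ) (hξ1 : ξ < 1) :
    (∃ u v : ℤ, 1 ≤ u ∧ 0 ≤ v ∧ v ≤ u ∧ IsCoprime u v ∧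
      (u : ℝ) < 2 * c ^ 2 / ((c - 1) * (c' - c)) * (1 / ε) ∧
      |ξ - (v : ℝ) / (u : ℝ)| ≤ 2 / (c - 1) * (1 + c ^ 2 / (c' - c)) * (1 / ((u : ℝ) * Q))) ∨
    (∃ p q : ℤ, Q ≤ (q : ℝ) ∧ (q : ℝ) ≤ c * Q ∧
      ε / (q : ℝ) ≤ ξ - (p : ℝ) / (q : ℝ) ∧ ξ - (p : ℝ) / (q : ℝ) ≤ c' * ε / (q : ℝ)) := by
  have hQ0 : 0 < Q := by linarith
  have hB : 0 < (c - 1) * Q := mul_pos (by linarith) hQ0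
  obtain ⟨u, v, hu, huv, hu_le, hδ⟩ := exists_coprime_abs_mul_sub_lt_inv_max ξ ((c - 1) * Q)
  have hδB : |(u : ℝ) * ξ - v| < 1 / ((c - 1) * Q) :=
    one_div ((c - 1) * Q) ▸ hδ.trans_le (inv_anti₀ hB (le_max_right _ _))
  by_cases hsmall : (u : ℝ) < 2 * c ^ 2 / ((c - 1) * (c' - c)) * (1 / ε)
  · left
    obtain ⟨hv0, hvu⟩ := mem_Icc_of_abs_mul_sub_lt_one hu.le hξ0.le hξ1.le
      (hδ.trans_le (inv_le_one_of_one_le₀ (le_max_left _ _)))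
    exact ⟨u, v, hu, hv0, hvu, huv, hsmall,
      abs_sub_div_le_of_abs_mul_sub_lt hc hcc' hQ0 (mod_cast hu) hδB⟩
  · right
    rw [not_lt] at hsmall
    have hu1 : 1 < (u : ℝ) :=
      (one_lt_mul_of_lt_of_le (one_lt_two_mul_sq_div hc hcc' hc')
        (one_le_one_div hε0 hε1.le)).trans_le hsmall
    have hu_B : (u : ℝ) ≤ (c - 1) * Q := (le_max_iff.mp hu_le).resolve_left hu1.not_ge
    obtain ⟨p, q, hQq, hqcQ, hlo, hhi⟩ := exists_int_mul_sub_mem_Icc ξ huv hu hQ0.le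
      (by linarith) (one_add_two_mul_abs_le hc hcc' hε0 hQ0 hδB hsmall)
    have hq : (0 : ℝ) < q := hQ0.trans_le hQq
    refine ⟨p, q, hQq, hqcQ, ?_⟩
    rw [sub_div' hq.ne', mul_comm ξ]
    exact ⟨by gcongr, by gcongr⟩

theorem farey_dichotomy (c c' ε Q : ℝ)
    (hc : 1 < c) (hcc' : c < c') (hc' : c' < 2) (hε0 : 0 < ε) (hε1 : ε < 1) (hQ : 1 < Q)
    (ξ : ℝ) (hξ : Irrational ξ) (hξ0 : 0 < ξ) (hξ1 : ξ < 1) :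
    (∃ u v : ℤ, 1 ≤ u ∧ 0 ≤ v ∧ v ≤ u ∧ IsCoprime u v ∧
      (u : ℝ) < 2 * c ^ 2 / ((c - 1) * (c' - c)) * (1 / ε) ∧
      |ξ - (v : ℝ) / (u : ℝ)| ≤ 2 / (c - 1) * (1 + c ^ 2 / (c' - c)) * (1 / ((u : ℝ) * Q))) ∨
    (∃ p q : ℤ, Q ≤ (q : ℝ) ∧ (q : ℝ) ≤ c * Q ∧
      ε / (q : ℝ) ≤ ξ - (p : ℝ) / (q : ℝ) ∧ ξ - (p : ℝ) / (q : ℝ) ≤ c' * ε / (q : ℝ)) :=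
  farey_dichotomy_general c c' ε Q hc hcc' hc' hε0 hε1 hQ ξ hξ0 hξ1
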